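/- arXiv:2011.09845 — 2 statements merged into one kernel-verified Lean document; each statement's English description precedes it below -/
import Mathlib

section
/- For every integer Z ≥ 2, one has (1 - 2/Z²) > (1 - 2/(Z³ - Z²))^Z. -/
/-!
Put `x = 2 / (Z³ - Z²)`. Bernoulli's inequality `1 + Z x ≤ (1 + x)^Z` and `(1 - x²)^Z < 1` give
`(1 - x)^Z < 1 / (1 + Z x)`, and `Z x = 2 / (Z (Z - 1))` is large enough that
`(1 - 2 / Z²) (1 + Z x) ≥ 1` as soon as `Z ≥ 2`.
-/

theorem pow_one_sub_mul_one_add_natCast_mul_lt_one {R : Type*} [CommRing R] [LinearOrder R]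
    [IsStrictOrderedRing R] {x : R} (hx₀ : 0 < x) (hx₁ : x ≤ 1) {n : ℕ} (hn : n ≠ 0) :
    (1 - x) ^ n * (1 + n * x) < 1 :=
  calc (1 - x) ^ n * (1 + n * x)
      ≤ (1 - x) ^ n * (1 + x) ^ n :=
        mul_le_mul_of_nonneg_left (one_add_mul_le_pow (by linarith) n)
          (pow_nonneg (by linarith) n)
    _ = (1 - x * x) ^ n := by rw [← mul_pow]; ring
    _ < 1 := pow_lt_one₀ (by nlinarith) (by nlinarith) hn

theorem one_le_one_sub_two_div_sq_mul_one_add {z : ℝ} (hz : 2 ≤ z) :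
    1 ≤ (1 - 2 / z ^ 2) * (1 + z * (2 / (z ^ 3 - z ^ 2))) := by
  have hz₀ : z ≠ 0 := by positivity
  have hz₁ : z - 1 ≠ 0 := by linarith
  have hdiff : (1 - 2 / z ^ 2) * (1 + z * (2 / (z ^ 3 - z ^ 2))) - 1
      = 2 * (z - 2) / (z ^ 3 * (z - 1)) := by
    rw [show z ^ 3 - z ^ 2 = z ^ 2 * (z - 1) by ring]
    field_simp
    ring
  have : 0 ≤ 2 * (z - 2) / (z ^ 3 * (z - 1)) :=
    div_nonneg (by linarith) (mul_nonneg (by positivity) (by linarith))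
  linarith

/-- Theorem 3.3, inequality (1): for every integer `Z ≥ 2`,
`(1 - 2/Z²) > (1 - 2/(Z³ - Z²))^Z`. -/
theorem stmt_0 (Z : ℕ) (hZ : 2 ≤ Z) :
    (1 - 2 / (Z : ℝ) ^ 2) > (1 - 2 / ((Z : ℝ) ^ 3 - (Z : ℝ) ^ 2)) ^ Z := by
  have hz : (2 : ℝ) ≤ Z := by exact_mod_cast hZ
  have hden : 4 ≤ (Z : ℝ) ^ 3 - (Z : ℝ) ^ 2 := by nlinarith
  set x := 2 / ((Z : ℝ) ^ 3 - (Z : ℝ) ^ 2)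
  have hx₀ : 0 < x := by positivity
  have hx₁ : x ≤ 1 := by rw [div_le_one (by linarith)]; linarith
  have hpos : 0 < 1 + (Z : ℝ) * x := by positivity
  calc (1 - x) ^ Z
      < 1 / (1 + Z * x) := by
        rw [lt_div_iff₀ hpos]
        exact pow_one_sub_mul_one_add_natCast_mul_lt_one hx₀ hx₁ (by omega)
    _ ≤ 1 - 2 / (Z : ℝ) ^ 2 := by
        rw [div_le_iff₀ hpos]
        exact one_le_one_sub_two_div_sq_mul_one_add hz
end

section
/- For every integer Z ≥ 2 and all natural numbers a and b, (1 + 2/(Z² - 1))^a · (1 + 2/(Z³ - Z² - 1))^b ≤ (1 + 2/(Z³ - Z² - 1))^{aZ + b}. -/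
/-! Bernoulli's inequality gives `(1 + 2/(Z³ - Z² - 1))^Z ≥ 1 + 2Z/(Z³ - Z² - 1)`, and this is at
least `1 + 2/(Z² - 1)` because `Z³ - Z² - 1 ≤ Z(Z² - 1)`. Raising to the `a`-th power and multiplying
by the `b`-th power of the same base gives the claim. -/

lemma pow_mul_pow_le_pow_mul_add {R : Type*} [Semiring R] [PartialOrder R] [IsOrderedRing R]
    {x y : R} {n : ℕ} (hx : 0 ≤ x) (hy : 0 ≤ y) (hyx : y ≤ x ^ n) (a b : ℕ) :
    y ^ a * x ^ b ≤ x ^ (a * n + b) :=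
  calc y ^ a * x ^ b ≤ (x ^ n) ^ a * x ^ b := by gcongr
    _ = x ^ (a * n + b) := by rw [pow_add, ← pow_mul, mul_comm n a]

lemma two_div_sq_sub_one_le_mul_two_div {z : ℝ} (hz : 2 ≤ z) :
    2 / (z ^ 2 - 1) ≤ z * (2 / (z ^ 3 - z ^ 2 - 1)) := by
  have hsq : 0 < z ^ 2 - 1 := by nlinarith
  have hcube : 0 < z ^ 3 - z ^ 2 - 1 := by nlinarith
  rw [mul_div_assoc', div_le_div_iff₀ hsq hcube]
  nlinarith

lemma one_add_two_div_sq_sub_one_le_pow {Z : ℕ} (hZ : 2 ≤ Z) :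
    1 + 2 / ((Z : ℝ) ^ 2 - 1) ≤ (1 + 2 / ((Z : ℝ) ^ 3 - (Z : ℝ) ^ 2 - 1)) ^ Z := by
  have hZ' : (2 : ℝ) ≤ Z := by exact_mod_cast hZ
  have hcube : 0 ≤ 2 / ((Z : ℝ) ^ 3 - (Z : ℝ) ^ 2 - 1) := div_nonneg zero_le_two (by nlinarith)
  calc 1 + 2 / ((Z : ℝ) ^ 2 - 1)
      ≤ 1 + Z * (2 / ((Z : ℝ) ^ 3 - (Z : ℝ) ^ 2 - 1)) := by
        gcongr; exact two_div_sq_sub_one_le_mul_two_div hZ'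
    _ ≤ _ := one_add_mul_le_pow (by linarith) Z

/-- Iterated form of Theorem 3.3 (2): for every integer `Z ≥ 2` and naturals `a, b`,
`(1 + 2/(Z² - 1))^a · (1 + 2/(Z³ - Z² - 1))^b ≤ (1 + 2/(Z³ - Z² - 1))^(aZ + b)`. -/
theorem stmt_3 (Z : ℕ) (hZ : 2 ≤ Z) (a b : ℕ) :
    (1 + 2 / ((Z : ℝ) ^ 2 - 1)) ^ a * (1 + 2 / ((Z : ℝ) ^ 3 - (Z : ℝ) ^ 2 - 1)) ^ b ≤
      (1 + 2 / ((Z : ℝ) ^ 3 - (Z : ℝ) ^ 2 - 1)) ^ (a * Z + b) := by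
  have hZ' : (2 : ℝ) ≤ Z := by exact_mod_cast hZ
  have hsq : 0 ≤ 2 / ((Z : ℝ) ^ 2 - 1) := div_nonneg zero_le_two (by nlinarith)
  have hcube : 0 ≤ 2 / ((Z : ℝ) ^ 3 - (Z : ℝ) ^ 2 - 1) := div_nonneg zero_le_two (by nlinarith)
  exact pow_mul_pow_le_pow_mul_add (by linarith) (by linarith)
    (one_add_two_div_sq_sub_one_le_pow hZ) a b
end
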